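/- Let K be a field complete with respect to a nonarchimedean absolute value whose value group |K^×| is dense in ℝ_{>0}. Let (U, ‖·‖) be a seminormed K-vector space, let S ⊆ U be a finite subset with n := card(S) ≥ 1, and let V be the K-linear span of S. Then there exists a decomposable norm v on V such that: (1) ‖x‖ ≤ v(x) for every x ∈ V; (2) for every x ∈ S, v(x) ≤ ((n+1)/n)·‖x‖ if ‖x‖ ≠ 0, and v(x) ≤ 1/(n+1) if ‖x‖ = 0. -/

import Mathlib

noncomputable section

/-- A nonarchimedean seminorm on a `K`-vector space. -/
def IsNASeminorm (K : Type*) [NormedField K] {U : Type*} [AddCommGroup U] [Module K U]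
    (p : U → ℝ) : Prop :=
  (∀ x, 0 ≤ p x) ∧ (∀ (a : K) (x : U), p (a • x) = ‖a‖ * p x) ∧
    ∀ x y, p (x + y) ≤ max (p x) (p y)

/-- A decomposable norm on a finite-dimensional `K`-vector space: there exist a basis
`(e 1, …, e d)` and positive reals `r 1, …, r d` such that
`v (∑ᵢ λᵢ • eᵢ) = maxᵢ (‖λᵢ‖ · rᵢ)`. -/
def IsDecomposableNorm (K : Type*) [NormedField K] {W : Type*} [AddCommGroup W] [Module K W]
    (v : W → ℝ) : Prop :=
  ∃ (d : ℕ) (b : Module.Basis (Fin d) K W) (r : Fin d → ℝ),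
    (∀ i, 0 < r i) ∧ ∀ y : W, v y = ⨆ i, ‖b.repr y i‖ * r i

/-! Put `R = (n + 1) / n`. Since the value group is dense, each `x ∈ S` can be rescaled by a
unit `c x` with `1 < p (c x • x) < R`, or with `‖c x‖` huge when `p x = 0`. Among the tuples of
rescaled vectors take one maximizing `‖det‖` with respect to a fixed basis: it is a basis `b`, and
by Cramer's rule every rescaled vector has coordinates of norm at most `1` in it. The norm
`y ↦ R · maxᵢ ‖b.repr y i‖` is decomposable, dominates `p` by the ultrametric inequality, and is
at most `‖c x‖⁻¹ · R` at `x ∈ S`. -/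

open Module Submodule

section

variable {K : Type*} [NormedField K] {V : Type*} [AddCommGroup V] [Module K V] {p : V → ℝ}

namespace IsNASeminorm

lemma map_zero (hp : IsNASeminorm K p) : p 0 = 0 := by
  simpa using hp.2.1 0 0

lemma comp_linearMap {W : Type*} [AddCommGroup W] [Module K W] (hp : IsNASeminorm K p)
    (f : W →ₗ[K] V) : IsNASeminorm K (p ∘ f) :=
  ⟨fun _ => hp.1 _, fun a x => by simp [hp.2.1], fun x y => by simpa using hp.2.2 (f x) (f y)⟩

lemma map_sum_le (hp : IsNASeminorm K p) {ι : Type*} (s : Finset ι) (f : ι → V) {B : ℝ}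
    (hB : 0 ≤ B) (h : ∀ i ∈ s, p (f i) ≤ B) : p (∑ i ∈ s, f i) ≤ B := by
  classical
  induction s using Finset.cons_induction with
  | empty => simpa [hp.map_zero] using hB
  | cons a s ha ih =>
    rw [Finset.sum_cons]
    exact (hp.2.2 _ _).trans <| max_le (h a (Finset.mem_cons_self a s))
      (ih fun i hi => h i (Finset.mem_cons_of_mem hi))

lemma le_iSup_norm_repr_mul {ι : Type*} [Fintype ι] (hp : IsNASeminorm K p) (b : Basis ι K V)
    {R : ℝ} (hR : 0 ≤ R) (hb : ∀ i, p (b i) ≤ R) (y : V) :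
    p y ≤ ⨆ i, ‖b.repr y i‖ * R := by
  have hsup : 0 ≤ ⨆ i, ‖b.repr y i‖ * R :=
    Real.iSup_nonneg fun i => mul_nonneg (norm_nonneg _) hR
  conv_lhs => rw [← b.sum_repr y]
  refine hp.map_sum_le _ _ hsup fun i _ => ?_
  rw [hp.2.1]
  exact (mul_le_mul_of_nonneg_left (hb i) (norm_nonneg _)).trans
    (le_ciSup (f := fun j => ‖b.repr y j‖ * R) (Set.finite_range _).bddAbove i)

end IsNASeminorm

lemma IsDecomposableNorm.map_smul {v : V → ℝ} (hv : IsDecomposableNorm K v) (a : K) (y : V) :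
    v (a • y) = ‖a‖ * v y := by
  obtain ⟨d, b, r, -, hvb⟩ := hv
  rw [hvb, hvb, Real.mul_iSup_of_nonneg (norm_nonneg a)]
  simp only [_root_.map_smul, Finsupp.smul_apply, smul_eq_mul, norm_mul, mul_assoc]

lemma Module.Basis.exists_det_comp_ne_zero {ι κ : Type*} [Fintype κ] [DecidableEq κ]
    (e : Basis κ K V) {F : ι → V} (hF : span K (Set.range F) = ⊤) :
    ∃ g : κ → ι, e.det (F ∘ g) ≠ 0 := by
  let b := Basis.ofSpan hF.ge
  have hb : ∀ k, ∃ i, F i = b.reindex (b.indexEquiv e) k :=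
    fun k => Basis.ofSpan_subset hF.ge ⟨(b.indexEquiv e).symm k, by rw [Basis.reindex_apply]⟩
  choose g hg using hb
  refine ⟨g, ?_⟩
  rw [show F ∘ g = b.reindex (b.indexEquiv e) from funext hg]
  exact (e.isUnit_det _).ne_zero

/-- A basis chosen from a spanning family by maximizing `‖det‖`: by Cramer's rule the
coordinate `b.repr (F x) k` is a ratio of two such determinants. -/
lemma exists_basis_mem_range_norm_repr_le_one [FiniteDimensional K V] {ι : Type*} [Finite ι]
    {F : ι → V} (hF : span K (Set.range F) = ⊤) :
    ∃ b : Basis (Fin (finrank K V)) K V,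
      (∀ k, b k ∈ Set.range F) ∧ ∀ x k, ‖b.repr (F x) k‖ ≤ 1 := by
  classical
  let e := Module.finBasis K V
  obtain ⟨g₀, hg₀⟩ := e.exists_det_comp_ne_zero hF
  have : Nonempty (Fin (finrank K V) → ι) := ⟨g₀⟩
  obtain ⟨g, hg_max⟩ := Finite.exists_max fun g => ‖e.det (F ∘ g)‖
  have hg_pos : 0 < ‖e.det (F ∘ g)‖ := (norm_pos_iff.2 hg₀).trans_le (hg_max g₀)
  obtain ⟨hli, hsp⟩ := e.is_basis_iff_det.2 (isUnit_iff_ne_zero.2 (norm_pos_iff.1 hg_pos))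
  refine ⟨Basis.mk hli hsp.ge, fun k => by simp, fun x k => ?_⟩
  have hcramer : e.det (F ∘ g) * (Basis.mk hli hsp.ge).repr (F x) k =
      e.det (F ∘ Function.update g k x) := by
    simpa [Function.comp_update] using
      LinearMap.congr_fun (e.det_smul_mk_coord_eq_det_update hli hsp.ge k) (F x)
  have hle := hg_max (Function.update g k x)
  rw [← hcramer, norm_mul] at hle
  exact (mul_le_iff_le_one_right hg_pos).1 hle

lemma IsNASeminorm.exists_isDecomposableNorm_of_span_eq_top [FiniteDimensional K V]
    (hp : IsNASeminorm K p) {ι : Type*} [Finite ι] {F : ι → V}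
    (hF : span K (Set.range F) = ⊤) {R : ℝ} (hR : 0 < R) (hpF : ∀ x, p (F x) ≤ R) :
    ∃ v : V → ℝ, IsDecomposableNorm K v ∧ (∀ y, p y ≤ v y) ∧ ∀ x, v (F x) ≤ R := by
  obtain ⟨b, hb_mem, hb_repr⟩ := exists_basis_mem_range_norm_repr_le_one hF
  have hpb : ∀ k, p (b k) ≤ R := fun k => by
    obtain ⟨x, hx⟩ := hb_mem k
    exact hx ▸ hpF x
  refine ⟨fun y => ⨆ k, ‖b.repr y k‖ * R, ⟨_, b, fun _ => R, fun _ => hR, fun _ => rfl⟩,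
    hp.le_iSup_norm_repr_mul b hR.le hpb, fun x => ?_⟩
  exact Real.iSup_le (fun k => mul_le_of_le_one_left hR.le (hb_repr x k)) hR.le

end

lemma NormedField.exists_unit_norm_mul_mem_Ioo {K : Type*} [DenselyNormedField K] {a r₁ r₂ : ℝ}
    (ha : 0 < a) (h₀ : 0 ≤ r₁) (h : r₁ < r₂) : ∃ c : Kˣ, ‖(c : K)‖ * a ∈ Set.Ioo r₁ r₂ := by
  obtain ⟨c, hc₁, hc₂⟩ := NormedField.exists_lt_norm_lt K (div_nonneg h₀ ha.le)
    (div_lt_div_of_pos_right h ha)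
  have hc : c ≠ 0 := norm_pos_iff.1 ((div_nonneg h₀ ha.le).trans_lt hc₁)
  exact ⟨Units.mk0 c hc, (div_lt_iff₀ ha).1 hc₁, (lt_div_iff₀ ha).1 hc₂⟩

lemma Submodule.span_range_subset_span_eq_top {K U : Type*} [Semiring K] [AddCommMonoid U]
    [Module K U] (s : Set U) :
    span K (Set.range fun x : s => (⟨x, subset_span x.2⟩ : span K s)) = ⊤ := by
  convert span_span_coe_preimage (R := K) (s := s)
  ext y
  exact ⟨fun ⟨x, hx⟩ => hx ▸ x.2, fun hy => ⟨⟨y, hy⟩, rfl⟩⟩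

lemma IsNASeminorm.exists_isDecomposableNorm_on_span {K : Type*} [NormedField K] {U : Type*}
    [AddCommGroup U] [Module K U] {p : U → ℝ} (hp : IsNASeminorm K p) {s : Set U}
    (hs : s.Finite) (c : U → Kˣ) {R : ℝ} (hR : 0 < R) (hpc : ∀ x ∈ s, p ((c x : K) • x) ≤ R) :
    ∃ v : span K s → ℝ, IsDecomposableNorm K v ∧ (∀ y : span K s, p y ≤ v y) ∧
      ∀ x (hx : x ∈ s), v ⟨x, subset_span hx⟩ ≤ ‖(c x : K)‖⁻¹ * R := by
  have : FiniteDimensional K (span K s) := FiniteDimensional.span_of_finite K hs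
  have : Finite s := hs.to_subtype
  let F : s → span K s := (fun x : s => c x) • fun x : s => ⟨x, subset_span x.2⟩
  obtain ⟨v, hv, hpv, hvF⟩ :=
    (hp.comp_linearMap (span K s).subtype).exists_isDecomposableNorm_of_span_eq_top
      (F := F) (Basis.units_smul_span_eq_top (span_range_subset_span_eq_top s)) hR
      fun x => hpc x x.2
  refine ⟨v, hv, hpv, fun x hx => ?_⟩
  have hxF : (⟨x, subset_span hx⟩ : span K s) = (c x : K)⁻¹ • F ⟨x, hx⟩ := by
    ext; simp [F, Units.smul_def, smul_smul]
  rw [hxF, hv.map_smul, norm_inv]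
  exact mul_le_mul_of_nonneg_left (hvF _) (inv_nonneg.2 (norm_nonneg _))

theorem exists_decomposable_norm_on_span_general
    {K : Type*} [DenselyNormedField K]
    {U : Type*} [AddCommGroup U] [Module K U]
    (p : U → ℝ) (hp : IsNASeminorm K p)
    (S : Finset U) (hS : S.Nonempty) :
    ∃ v : ↥(Submodule.span K (S : Set U)) → ℝ,
      IsDecomposableNorm K v ∧
      (∀ y : ↥(Submodule.span K (S : Set U)), p ↑y ≤ v y) ∧
      (∀ x, ∀ hx : x ∈ S,
        (p x ≠ 0 →
          v ⟨x, Submodule.subset_span hx⟩ ≤ ((S.card : ℝ) + 1) / (S.card : ℝ) * p x) ∧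
        (p x = 0 →
          v ⟨x, Submodule.subset_span hx⟩ ≤ 1 / ((S.card : ℝ) + 1))) := by
  have hn : (0 : ℝ) < S.card := by exact_mod_cast hS.card_pos
  set R := ((S.card : ℝ) + 1) / S.card
  have hR : 1 < R := by rw [lt_div_iff₀ hn]; linarith
  have hscale : ∀ x : U, ∃ c : Kˣ, (p x ≠ 0 → ‖(c : K)‖ * p x ∈ Set.Ioo 1 R) ∧
      (p x = 0 → R * (S.card + 1) < ‖(c : K)‖) := by
    intro x
    rcases (hp.1 x).eq_or_lt with hx | hx
    · obtain ⟨c, hc⟩ := NormedField.exists_lt_norm K (R * (S.card + 1))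
      have hc₀ : c ≠ 0 := norm_pos_iff.1 (lt_trans (by positivity) hc)
      exact ⟨Units.mk0 c hc₀, fun h => absurd hx.symm h, fun _ => hc⟩
    · obtain ⟨c, hc⟩ := NormedField.exists_unit_norm_mul_mem_Ioo (K := K) hx zero_le_one hR
      exact ⟨c, fun _ => hc, fun h => absurd h hx.ne'⟩
  choose c hc_pos hc_zero using hscale
  have hpc : ∀ x ∈ (S : Set U), p ((c x : K) • x) ≤ R := fun x _ => by
    rw [hp.2.1]
    by_cases hx : p x = 0
    · rw [hx, mul_zero]; positivity
    · exact (hc_pos x hx).2.le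
  obtain ⟨v, hv, hpv, hvS⟩ := hp.exists_isDecomposableNorm_on_span S.finite_toSet c
    (by positivity) hpc
  refine ⟨v, hv, hpv, fun x hx => ⟨fun h => (hvS x hx).trans ?_, fun h => (hvS x hx).trans ?_⟩⟩
  · have hcx : 0 < ‖(c x : K)‖ := norm_pos_iff.2 (c x).ne_zero
    rw [mul_comm]
    refine mul_le_mul_of_nonneg_left ?_ (by positivity)
    exact (inv_le_iff_one_le_mul₀' hcx).2 (hc_pos x h).1.le
  · rw [inv_mul_le_iff₀ (norm_pos_iff.2 (c x).ne_zero), mul_one_div, le_div_iff₀ (by positivity)]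
    exact (hc_zero x h).le

/-- **Approximation by decomposable norms on the span of a finite set**
(key step in Proposition `prop:limitofdecomposables`).
Let `K` be a complete nonarchimedean valued field whose value group is dense in `ℝ_{>0}`,
`(U, p)` a seminormed `K`-vector space, `S ⊆ U` a finite nonempty subset of cardinality `n`,
and `V` the span of `S`.  Then there is a decomposable norm `v` on `V` with `p ≤ v` on `V`,
`v x ≤ ((n+1)/n) · p x` for every `x ∈ S` with `p x ≠ 0`, and `v x ≤ 1/(n+1)` for every
`x ∈ S` with `p x = 0`. -/
theorem exists_decomposable_norm_on_span
    {K : Type*} [DenselyNormedField K] [IsUltrametricDist K] [CompleteSpace K]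
    {U : Type*} [AddCommGroup U] [Module K U]
    (p : U → ℝ) (hp : IsNASeminorm K p)
    (S : Finset U) (hS : S.Nonempty) :
    ∃ v : ↥(Submodule.span K (S : Set U)) → ℝ,
      IsDecomposableNorm K v ∧
      (∀ y : ↥(Submodule.span K (S : Set U)), p ↑y ≤ v y) ∧
      (∀ x, ∀ hx : x ∈ S,
        (p x ≠ 0 →
          v ⟨x, Submodule.subset_span hx⟩ ≤ ((S.card : ℝ) + 1) / (S.card : ℝ) * p x) ∧
        (p x = 0 →
          v ⟨x, Submodule.subset_span hx⟩ ≤ 1 / ((S.card : ℝ) + 1))) :=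
  exists_decomposable_norm_on_span_general p hp S hS

end
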